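/- Let K be a compact metric space and f : K → ℝ a bounded function lying in D(K). Then there is a countable ordinal α with osc_α f = osc_{α+1} f, and setting λ = ‖|f| + osc_α f‖_∞, u = (λ - osc_α f + f)/2, and v = (λ - osc_α f - f)/2, the functions u and v are nonnegative lower semicontinuous with f = u - v and ‖f‖_D = λ = ‖u + v‖_∞. -/

import Mathlib

open Filter Topology

section DKdefs
variable {K : Type*} [MetricSpace K] [CompactSpace K]

/-- A bounded lower semicontinuous real function. -/
def BddLSC (u : K → ℝ) : Prop := LowerSemicontinuous u ∧ ∃ M : ℝ, ∀ x, |u x| ≤ M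

/-- `f ∈ D(K)`: `f = (u₁ - u₂) + i(u₃ - u₄)` with the `uᵢ` bounded lower semicontinuous. -/
def MemDK (f : K → ℂ) : Prop :=
  ∃ u₁ u₂ u₃ u₄ : K → ℝ, BddLSC u₁ ∧ BddLSC u₂ ∧ BddLSC u₃ ∧ BddLSC u₄ ∧
    ∀ x, f x = ((u₁ x - u₂ x : ℝ) : ℂ) + Complex.I * ((u₃ x - u₄ x : ℝ) : ℂ)

/-- `f ∈ D(K)` for real `f`: a difference of bounded lower semicontinuous functions. -/
def MemDKReal (f : K → ℝ) : Prop :=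
  ∃ u₁ u₂ : K → ℝ, BddLSC u₁ ∧ BddLSC u₂ ∧ ∀ x, f x = u₁ x - u₂ x

/-- Upper semicontinuous envelope `Ug(x) = limsup_{y → x} g(y)` (non-exclusive limsup). -/
noncomputable def uscEnv (g : K → EReal) : K → EReal := fun x => limsup g (𝓝 x)

/-- The transfinite oscillations `osc_β f` of a complex-valued function. -/
noncomputable def oscOrd (f : K → ℂ) (β : Ordinal) : K → EReal :=
  Ordinal.limitRecOn β (fun _ => (0 : EReal))
    (fun _ ih => uscEnv fun x =>
      limsup (fun y => ((‖f y - f x‖ : ℝ) : EReal) + ih y) (𝓝 x))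
    (fun β _ ih => uscEnv fun x => ⨆ (α : Ordinal) (h : α < β), ih α h x)

/-- The transfinite oscillations `osc_β f` of a real-valued function. -/
noncomputable def oscOrdR (f : K → ℝ) (β : Ordinal) : K → EReal :=
  Ordinal.limitRecOn β (fun _ => (0 : EReal))
    (fun _ ih => uscEnv fun x =>
      limsup (fun y => ((|f y - f x| : ℝ) : EReal) + ih y) (𝓝 x))
    (fun β _ ih => uscEnv fun x => ⨆ (α : Ordinal) (h : α < β), ih α h x)

/-- The positive transfinite oscillations `v_β f` of a real-valued function
(as `osc_β`, but with `f y - f x` in place of `|f y - f x|`). -/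
noncomputable def vOrd (f : K → ℝ) (β : Ordinal) : K → EReal :=
  Ordinal.limitRecOn β (fun _ => (0 : EReal))
    (fun _ ih => uscEnv fun x =>
      limsup (fun y => ((f y - f x : ℝ) : EReal) + ih y) (𝓝 x))
    (fun β _ ih => uscEnv fun x => ⨆ (α : Ordinal) (h : α < β), ih α h x)

/-- The `D(K)`-norm of a real function: the infimum of `sup_{x} Σ_j |φ_j x|` over all
pointwise representations `f = Σ_j φ_j` with `φ_j` continuous. -/
noncomputable def DNorm (f : K → ℝ) : ℝ :=
  sInf {M : ℝ | ∃ φ : ℕ → K → ℝ, (∀ j, Continuous (φ j)) ∧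
    (∀ x, HasSum (fun j => φ j x) (f x)) ∧
    (∀ x, Summable fun j => |φ j x|) ∧ ∀ x, (∑' j, |φ j x|) ≤ M}

end DKdefs

/-!
The oscillations `osc_β f` increase with `β` and are upper semicontinuous, so in the second
countable space `K` they stabilise at a countable ordinal `α`. Then `g = osc_α f` satisfies
`limsup_{y → x} (|f y - f x| + g y) ≤ g x`, and every nonnegative solution `h` of this inequality
dominates all the `osc_β f`.

If `f = u - v` with `u, v ≥ 0` lower semicontinuous, then `U(u + v) - (u + v)` is such an `h`,
whence `|f| + osc_β f ≤ sup (u + v)`; applied to `u = Σ φ_j⁺`, `v = Σ φ_j⁻` this gives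
`λ ≤ ‖f‖_D`. Conversely, the inequality for `g` makes `(λ - g ± f) / 2` lower semicontinuous, and
expanding both as series of continuous functions (through the Lipschitz minorants
`inf_y (u y + n d(x, y))`) represents `f` with `Σ_j |φ_j| = λ - g ≤ λ`. Finally `g - inf g` is
again a solution, so `inf g = 0` and `sup (λ - g) = λ`.
-/

theorem ciSup_const_sub_eq_sub_ciInf {ι : Type*} [Nonempty ι] {g : ι → ℝ}
    (hg : BddBelow (Set.range g)) (c : ℝ) : ⨆ i, (c - g i) = c - ⨅ i, g i := by
  obtain ⟨m, hm⟩ := hg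
  have hbdd : BddAbove (Set.range fun i => c - g i) :=
    ⟨c - m, Set.forall_mem_range.2 fun i => sub_le_sub_left (hm ⟨i, rfl⟩) c⟩
  refine le_antisymm (ciSup_le fun i => sub_le_sub_left (ciInf_le ⟨m, hm⟩ i) c) ?_
  rw [sub_le_comm]
  exact le_ciInf fun i => sub_le_comm.1 (le_ciSup hbdd i)

section Semicontinuity

variable {X : Type*} [TopologicalSpace X]

theorem EReal.coe_add_sub_coe (a b : ℝ) (c : EReal) :
    (a : EReal) + (c - b) = c + ((a - b : ℝ) : EReal) := by
  rw [EReal.coe_sub, sub_eq_add_neg, sub_eq_add_neg, add_left_comm]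

theorem le_limsup_nhds {α : Type*} [CompleteLattice α] (g : X → α) (x : X) :
    g x ≤ limsup g (𝓝 x) :=
  le_limsup_of_frequently_le (frequently_iff.2 fun hU => ⟨x, mem_of_mem_nhds hU, le_rfl⟩)

theorem upperSemicontinuous_limsup_nhds (g : X → EReal) :
    UpperSemicontinuous fun x => limsup g (𝓝 x) := by
  intro x b hb
  obtain ⟨c, hxc, hcb⟩ := exists_between hb
  obtain ⟨U, hU, hUo, hxU⟩ := eventually_nhds_iff.1 (eventually_lt_of_limsup_lt hxc)
  filter_upwards [hUo.mem_nhds hxU] with y hy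
  refine lt_of_le_of_lt (limsup_le_of_le (h := ?_)) hcb
  filter_upwards [hUo.mem_nhds hy] with z hz using (hU z hz).le

theorem limsup_add_coe_le {x : X} (h : X → EReal) {a : X → ℝ} (ha : UpperSemicontinuousAt a x) :
    limsup (fun y => h y + a y) (𝓝 x) ≤ limsup h (𝓝 x) + a x := by
  have ha' : limsup (fun y => (a y : EReal)) (𝓝 x) ≤ a x :=
    upperSemicontinuousAt_iff_limsup_le.1 <|
      continuous_coe_real_ereal.continuousAt.comp_upperSemicontinuousAt ha
        EReal.coe_strictMono.monotone
  have hbot : limsup (fun y => (a y : EReal)) (𝓝 x) ≠ ⊥ :=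
    ne_bot_of_le_ne_bot (EReal.coe_ne_bot (a x)) (le_limsup_nhds (fun y => (a y : EReal)) x)
  exact (EReal.limsup_add_le (Or.inr (ha'.trans_lt (EReal.coe_lt_top _)).ne) (Or.inr hbot)).trans
    (add_le_add le_rfl ha')

theorem upperSemicontinuous_abs_sub_sub_add {u v : X → ℝ} (hu : LowerSemicontinuous u)
    (hv : LowerSemicontinuous v) (c : ℝ) :
    UpperSemicontinuous fun y => |u y - v y - c| - (u y + v y) := by
  have hmax : ∀ y, |u y - v y - c| - (u y + v y) = max (-c - 2 * v y) (c - 2 * u y) := by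
    intro y
    rw [abs_eq_max_neg, ← max_sub_sub_right]
    ring_nf
  simp only [hmax]
  exact UpperSemicontinuous.sup
    ((continuous_const.sub (continuous_const.mul continuous_id)).comp_lowerSemicontinuous_antitone
      hv fun a b h => by dsimp; linarith)
    ((continuous_const.sub (continuous_const.mul continuous_id)).comp_lowerSemicontinuous_antitone
      hu fun a b h => by dsimp; linarith)

theorem lowerSemicontinuous_tsum_of_nonneg {ι : Type*} {g : ι → X → ℝ}
    (hg : ∀ j, LowerSemicontinuous (g j)) (hg0 : ∀ j x, 0 ≤ g j x) (hs : ∀ x, Summable (g · x)) :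
    LowerSemicontinuous fun x => ∑' j, g j x := by
  intro x c hc
  obtain ⟨s, hs'⟩ := ((hs x).hasSum.eventually (eventually_gt_nhds hc)).exists
  filter_upwards [lowerSemicontinuous_sum (fun j _ => hg j) x c hs'] with y hy
  exact hy.trans_le ((hs y).sum_le_tsum s fun j _ => hg0 j y)

end Semicontinuity

theorem not_countable_Iio_ord_aleph_one : ¬ Countable (Set.Iio (Cardinal.aleph 1).ord) := by
  intro h
  have := Cardinal.mk_le_aleph0 (α := Set.Iio (Cardinal.aleph 1).ord)
  rw [Cardinal.mk_Iio_ordinal, Cardinal.card_ord, Cardinal.lift_le_aleph0] at this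
  exact this.not_gt Cardinal.aleph0_lt_aleph_one

theorem exists_lt_ord_aleph_one_eq_succ {X : Type*} [TopologicalSpace X] [SecondCountableTopology X]
    {F : Ordinal → X → EReal} (hF : Monotone F) (husc : ∀ α, UpperSemicontinuous (F α)) :
    ∃ α < (Cardinal.aleph 1).ord, F α = F (α + 1) := by
  by_contra! hne
  let B := TopologicalSpace.countableBasis X
  have : Countable B := (TopologicalSpace.countable_countableBasis X).to_subtype
  -- A strict increase at `α` is witnessed by a basic open set and a rational which no later stage
  -- can witness again, so these witnesses inject `ω₁` into a countable set.
  have hwit : ∀ α : Set.Iio (Cardinal.aleph 1).ord, ∃ p : B × ℚ,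
      (∀ y ∈ (p.1 : Set X), F α y < (p.2 : ℝ)) ∧
        ∃ x ∈ (p.1 : Set X), ((p.2 : ℝ) : EReal) < F (α + 1) x := by
    intro α
    obtain ⟨x, hx⟩ := Function.ne_iff.1 (hne α α.2)
    obtain ⟨q, hαq, hqα⟩ :=
      EReal.exists_rat_btwn_of_lt ((hF (le_self_add : α.1 ≤ α.1 + 1) x).lt_of_ne hx)
    obtain ⟨V, hVB, hxV, hV⟩ :=
      (TopologicalSpace.isBasis_countableBasis X).exists_subset_of_mem_open hαq
        ((husc α).isOpen_preimage _)
    exact ⟨(⟨V, hVB⟩, q), hV, x, hxV, hqα⟩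
  choose p hp₁ hp₂ using hwit
  refine not_countable_Iio_ord_aleph_one
    (Function.Injective.countable (f := p) (.of_lt_imp_ne fun α β hαβ hp => ?_))
  obtain ⟨x, hxV, hqx⟩ := hp₂ α
  rw [hp] at hxV hqx
  exact (hp₁ β x hxV).not_ge (hqx.le.trans (hF (Order.add_one_le_of_lt hαβ) x))

section Oscillation

variable {K : Type*} [MetricSpace K]

theorem le_uscEnv (g : K → EReal) (x : K) : g x ≤ uscEnv g x := le_limsup_nhds g x

theorem upperSemicontinuous_uscEnv (g : K → EReal) : UpperSemicontinuous (uscEnv g) :=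
  upperSemicontinuous_limsup_nhds g

theorem uscEnv_le {g h : K → EReal} (hgh : g ≤ h) (hh : UpperSemicontinuous h) : uscEnv g ≤ h :=
  fun x => (limsup_le_limsup (Eventually.of_forall hgh)).trans (hh.limsup_le x)

variable (f : K → ℝ)

theorem oscOrdR_zero : oscOrdR f 0 = 0 := by
  rw [oscOrdR, Ordinal.limitRecOn_zero]
  rfl

theorem oscOrdR_succ (β : Ordinal) : oscOrdR f (β + 1) =
    uscEnv fun x => limsup (fun y => ((|f y - f x| : ℝ) : EReal) + oscOrdR f β y) (𝓝 x) := by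
  rw [oscOrdR, Ordinal.limitRecOn_add_one]
  rfl

theorem oscOrdR_limit {β : Ordinal} (hβ : Order.IsSuccLimit β) :
    oscOrdR f β = uscEnv fun x => ⨆ (α : Ordinal) (_ : α < β), oscOrdR f α x := by
  rw [oscOrdR, Ordinal.limitRecOn_limit _ _ _ _ hβ]
  rfl

theorem upperSemicontinuous_oscOrdR (β : Ordinal) : UpperSemicontinuous (oscOrdR f β) := by
  rcases Ordinal.zero_or_succ_or_isSuccLimit β with rfl | ⟨γ, rfl⟩ | hβ
  · rw [oscOrdR_zero]
    exact upperSemicontinuous_const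
  · rw [Order.succ_eq_add_one, oscOrdR_succ]
    exact upperSemicontinuous_uscEnv _
  · rw [oscOrdR_limit f hβ]
    exact upperSemicontinuous_uscEnv _

theorem oscOrdR_le_succ (β : Ordinal) : oscOrdR f β ≤ oscOrdR f (β + 1) := by
  rw [oscOrdR_succ]
  refine fun x => le_trans ?_ (le_uscEnv _ x)
  refine le_trans ?_ (le_limsup_nhds _ x)
  simp

theorem oscOrdR_monotone : Monotone (oscOrdR f) := by
  intro α β hαβ
  induction β using Ordinal.limitRecOn with
  | zero => rw [nonpos_iff_eq_zero.1 hαβ]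
  | add_one β ih =>
    rcases hαβ.lt_or_eq with h | rfl
    · exact (ih (Order.lt_add_one_iff.1 h)).trans (oscOrdR_le_succ f β)
    · exact le_rfl
  | limit β hβ ih =>
    rcases hαβ.lt_or_eq with h | rfl
    · rw [oscOrdR_limit f hβ]
      refine fun x => le_trans ?_ (le_uscEnv _ x)
      exact le_iSup₂ (f := fun γ (_ : γ < β) => oscOrdR f γ x) α h
    · exact le_rfl

theorem oscOrdR_nonneg (β : Ordinal) : 0 ≤ oscOrdR f β := by
  simpa only [oscOrdR_zero] using oscOrdR_monotone f (zero_le (a := β))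

theorem exists_oscOrdR_eq_coe {β : Ordinal} {M : ℝ}
    (hM : ∀ x, ((|f x| : ℝ) : EReal) + oscOrdR f β x ≤ M) :
    ∃ g : K → ℝ, (∀ x, oscOrdR f β x = g x) ∧ ∀ x, |f x| + g x ≤ M := by
  have hosc : ∀ x, oscOrdR f β x = (oscOrdR f β x).toReal := fun x =>
    (EReal.coe_toReal (ne_top_of_le_ne_top (EReal.coe_ne_top M)
      ((le_add_of_nonneg_left (EReal.coe_nonneg.2 (abs_nonneg _))).trans (hM x)))
      (ne_bot_of_le_ne_bot EReal.zero_ne_bot (oscOrdR_nonneg f β x))).symm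
  exact ⟨fun x => (oscOrdR f β x).toReal, hosc, fun x => by exact_mod_cast hosc x ▸ hM x⟩

end Oscillation

section Supersolution

variable {K : Type*} [MetricSpace K]

structure IsOscSupersolution (f : K → ℝ) (h : K → EReal) : Prop where
  nonneg : 0 ≤ h
  limsup_le : ∀ x, limsup (fun y => ((|f y - f x| : ℝ) : EReal) + h y) (𝓝 x) ≤ h x

namespace IsOscSupersolution

variable {f : K → ℝ}

section

variable {h : K → EReal}

theorem upperSemicontinuous (hh : IsOscSupersolution f h) : UpperSemicontinuous h :=
  upperSemicontinuous_iff_limsup_le.2 fun x => (limsup_le_limsup (Eventually.of_forall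
    fun y => le_add_of_nonneg_left (EReal.coe_nonneg.2 (abs_nonneg _)))).trans (hh.limsup_le x)

theorem oscOrdR_le (hh : IsOscSupersolution f h) (β : Ordinal) : oscOrdR f β ≤ h := by
  induction β using Ordinal.limitRecOn with
  | zero => rw [oscOrdR_zero]; exact hh.nonneg
  | add_one β ih =>
    rw [oscOrdR_succ]
    refine uscEnv_le (fun x => le_trans ?_ (hh.limsup_le x)) hh.upperSemicontinuous
    exact limsup_le_limsup (Eventually.of_forall fun y => add_le_add le_rfl (ih y))
  | limit β hβ ih =>
    rw [oscOrdR_limit f hβ]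
    exact uscEnv_le (fun x => iSup₂_le fun γ hγ => ih γ hγ x) hh.upperSemicontinuous

theorem neg (hh : IsOscSupersolution f h) : IsOscSupersolution (-f) h where
  nonneg := hh.nonneg
  limsup_le x := by simpa only [Pi.neg_apply, neg_sub_neg, abs_sub_comm] using hh.limsup_le x

end

variable {g : K → ℝ}

theorem eventually_lt (hg : IsOscSupersolution f fun x => (g x : EReal)) (x : K) {ε : ℝ}
    (hε : 0 < ε) : ∀ᶠ y in 𝓝 x, |f y - f x| + g y < g x + ε := by
  have := eventually_lt_of_limsup_lt <| (hg.limsup_le x).trans_lt <|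
    EReal.coe_lt_coe_iff.2 (lt_add_of_pos_right (g x) hε)
  filter_upwards [this] with y hy
  exact_mod_cast hy

theorem lowerSemicontinuous_half_add (hg : IsOscSupersolution f fun x => (g x : EReal)) (c : ℝ) :
    LowerSemicontinuous fun x => (c - g x + f x) / 2 := by
  intro x t ht
  filter_upwards [hg.eventually_lt x (by linarith : 0 < c - g x + f x - 2 * t)] with y hy
  linarith [neg_abs_le (f y - f x)]

theorem lowerSemicontinuous_half_sub (hg : IsOscSupersolution f fun x => (g x : EReal)) (c : ℝ) :
    LowerSemicontinuous fun x => (c - g x - f x) / 2 := by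
  simpa only [Pi.neg_apply, ← sub_eq_add_neg] using hg.neg.lowerSemicontinuous_half_add c

theorem sub_const (hg : IsOscSupersolution f fun x => (g x : EReal)) {c : ℝ} (hc : ∀ x, c ≤ g x) :
    IsOscSupersolution f fun x => ((g x - c : ℝ) : EReal) where
  nonneg x := EReal.coe_nonneg.2 (sub_nonneg.2 (hc x))
  limsup_le x := by
    simp_rw [sub_eq_add_neg, EReal.coe_add, ← add_assoc]
    exact (limsup_add_coe_le _ upperSemicontinuousAt_const).trans
      (add_le_add (hg.limsup_le x) le_rfl)

theorem iInf_eq_zero [Nonempty K] (hg : IsOscSupersolution f fun x => (g x : EReal)) {α : Ordinal}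
    (hα : ∀ x, oscOrdR f α x = g x) : ⨅ x, g x = 0 := by
  have hg0 : ∀ x, 0 ≤ g x := fun x => EReal.coe_nonneg.1 (hg.nonneg x)
  have hle : ∀ x, ⨅ x, g x ≤ g x := ciInf_le ⟨0, Set.forall_mem_range.2 hg0⟩
  obtain ⟨x⟩ := ‹Nonempty K›
  have := (hg.sub_const hle).oscOrdR_le α x
  rw [hα x, EReal.coe_le_coe_iff] at this
  linarith [Real.iInf_nonneg hg0]

end IsOscSupersolution

theorem isOscSupersolution_oscOrdR {f : K → ℝ} {α : Ordinal}
    (hα : oscOrdR f α = oscOrdR f (α + 1)) : IsOscSupersolution f (oscOrdR f α) where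
  nonneg := oscOrdR_nonneg f α
  limsup_le x := by
    rw [congrFun hα x, oscOrdR_succ]
    apply le_uscEnv _ x

theorem isOscSupersolution_uscEnv_sub {u v : K → ℝ} (hu : LowerSemicontinuous u)
    (hv : LowerSemicontinuous v) :
    IsOscSupersolution (fun x => u x - v x)
      (fun x => uscEnv (fun y => ((u y + v y : ℝ) : EReal)) x - ((u x + v x : ℝ) : EReal)) where
  nonneg x := (EReal.sub_nonneg (Or.inr (EReal.coe_ne_top _)) (Or.inr (EReal.coe_ne_bot _))).2
    (le_uscEnv (fun y => ((u y + v y : ℝ) : EReal)) x)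
  limsup_le x := by
    set W := uscEnv fun y => ((u y + v y : ℝ) : EReal)
    simp_rw [EReal.coe_add_sub_coe]
    calc _ ≤ limsup W (𝓝 x) + ((|u x - v x - (u x - v x)| - (u x + v x) : ℝ) : EReal) :=
          limsup_add_coe_le W (upperSemicontinuous_abs_sub_sub_add hu hv _ x)
      _ ≤ W x - ((u x + v x : ℝ) : EReal) := by
          rw [sub_self, abs_zero, zero_sub, EReal.coe_neg, ← sub_eq_add_neg]
          exact EReal.sub_le_sub ((upperSemicontinuous_uscEnv _).limsup_le x) le_rfl

theorem abs_add_oscOrdR_le {u v : K → ℝ} (hu : LowerSemicontinuous u) (hv : LowerSemicontinuous v)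
    (hu0 : ∀ x, 0 ≤ u x) (hv0 : ∀ x, 0 ≤ v x) {M : ℝ} (hM : ∀ x, u x + v x ≤ M) (β : Ordinal)
    (x : K) :
    ((|u x - v x| : ℝ) : EReal) + oscOrdR (fun x => u x - v x) β x ≤ M := by
  set W := uscEnv fun y => ((u y + v y : ℝ) : EReal)
  have habs : |u x - v x| ≤ u x + v x := (abs_sub _ _).trans_eq <| by
    rw [abs_of_nonneg (hu0 x), abs_of_nonneg (hv0 x)]
  calc ((|u x - v x| : ℝ) : EReal) + oscOrdR (fun x => u x - v x) β x
      ≤ ((|u x - v x| : ℝ) : EReal) + (W x - ((u x + v x : ℝ) : EReal)) :=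
        add_le_add le_rfl ((isOscSupersolution_uscEnv_sub hu hv).oscOrdR_le β x)
    _ = W x + ((|u x - v x| - (u x + v x) : ℝ) : EReal) := EReal.coe_add_sub_coe _ _ _
    _ ≤ W x := add_le_of_nonpos_right (EReal.coe_nonpos.2 (sub_nonpos.2 habs))
    _ ≤ M := uscEnv_le (fun y => EReal.coe_le_coe_iff.2 (hM y)) upperSemicontinuous_const x

theorem MemDKReal.exists_abs_add_oscOrdR_le {f : K → ℝ} (hf : MemDKReal f) :
    ∃ M : ℝ, ∀ β x, ((|f x| : ℝ) : EReal) + oscOrdR f β x ≤ M := by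
  obtain ⟨u₁, u₂, ⟨hu₁, C₁, hC₁⟩, ⟨hu₂, C₂, hC₂⟩, hf⟩ := hf
  set C := C₁ + C₂
  obtain rfl : f = fun x => (u₁ x + C) - (u₂ x + C) := funext fun x => by rw [hf x]; ring
  refine ⟨3 * C, abs_add_oscOrdR_le (hu₁.add lowerSemicontinuous_const)
    (hu₂.add lowerSemicontinuous_const) (fun x => ?_) (fun x => ?_) (fun x => ?_)⟩ <;>
  linarith [abs_le.1 (hC₁ x), abs_le.1 (hC₂ x), show C = C₁ + C₂ from rfl]

end Supersolution

section Series

variable {K : Type*} [MetricSpace K]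

theorem LowerSemicontinuous.exists_monotone_continuous_tendsto [Nonempty K] {u : K → ℝ}
    (hu : LowerSemicontinuous u) (hu0 : ∀ x, 0 ≤ u x) :
    ∃ c : ℕ → K → ℝ, (∀ n, Continuous (c n)) ∧ (∀ n x, 0 ≤ c n x) ∧ (∀ x, Monotone (c · x)) ∧
      ∀ x, Tendsto (c · x) atTop (𝓝 (u x)) := by
  set c : ℕ → K → ℝ := fun n x => ⨅ y, u y + n * dist x y
  have hbdd : ∀ (n : ℕ) x, BddBelow (Set.range fun y => u y + n * dist x y) :=
    fun n x => ⟨0, Set.forall_mem_range.2 fun y => add_nonneg (hu0 y) (by positivity)⟩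
  have hc0 : ∀ n x, 0 ≤ c n x := fun n x => le_ciInf fun y => add_nonneg (hu0 y) (by positivity)
  have hcu : ∀ n x, c n x ≤ u x := fun n x => by simpa using ciInf_le (hbdd n x) x
  have hlip : ∀ (n : ℕ) x x', c n x ≤ c n x' + n * dist x x' := by
    intro n x x'
    rw [← sub_le_iff_le_add]
    refine le_ciInf fun y => ?_
    have := ciInf_le (hbdd n x) y
    nlinarith [dist_triangle x x' y, (Nat.cast_nonneg n : (0 : ℝ) ≤ n)]
  refine ⟨c, fun n => (LipschitzWith.of_le_add_mul n (hlip n)).continuous, hc0, ?_, ?_⟩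
  · refine fun x => monotone_nat_of_le_succ fun n => le_ciInf fun y => ?_
    have := ciInf_le (hbdd n x) y
    push_cast
    nlinarith [dist_nonneg (x := x) (y := y)]
  · intro x
    refine tendsto_order.2
      ⟨fun t ht => ?_, fun t ht => Eventually.of_forall fun n => (hcu n x).trans_lt ht⟩
    obtain ⟨s, hts, hsu⟩ := exists_between ht
    obtain ⟨δ, hδ, hball⟩ := Metric.eventually_nhds_iff.1 (hu x s hsu)
    obtain ⟨N, hN⟩ := exists_nat_ge (s / δ)
    refine eventually_atTop.2 ⟨N, fun n hn => hts.trans_le (le_ciInf fun y => ?_)⟩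
    have hsn : s ≤ n * δ := (div_le_iff₀ hδ).1 (hN.trans (Nat.cast_le.2 hn))
    rcases lt_or_ge (dist y x) δ with hy | hy
    · nlinarith [hball hy, dist_nonneg (x := x) (y := y), (Nat.cast_nonneg n : (0 : ℝ) ≤ n)]
    · rw [dist_comm] at hy
      nlinarith [hu0 y, (Nat.cast_nonneg n : (0 : ℝ) ≤ n)]

theorem LowerSemicontinuous.exists_continuous_hasSum [Nonempty K] {u : K → ℝ}
    (hu : LowerSemicontinuous u) (hu0 : ∀ x, 0 ≤ u x) :
    ∃ ψ : ℕ → K → ℝ, (∀ n, Continuous (ψ n)) ∧ (∀ n x, 0 ≤ ψ n x) ∧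
      ∀ x, HasSum (ψ · x) (u x) := by
  obtain ⟨c, hc, hc0, hmono, hlim⟩ := hu.exists_monotone_continuous_tendsto hu0
  let ψ : ℕ → K → ℝ := fun
    | 0 => c 0
    | n + 1 => c (n + 1) - c n
  have hψ0 : ∀ n x, 0 ≤ ψ n x := by
    rintro (_ | n) x
    exacts [hc0 0 x, sub_nonneg.2 (hmono x n.le_succ)]
  have hpartial : ∀ n x, ∑ i ∈ Finset.range (n + 1), ψ i x = c n x := by
    intro n x
    induction n with
    | zero => simp [ψ]
    | succ n ih => rw [Finset.sum_range_succ, ih]; simp [ψ]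
  refine ⟨ψ, ?_, hψ0, fun x => (hasSum_iff_tendsto_nat_of_nonneg (hψ0 · x) _).2 ?_⟩
  · rintro (_ | n)
    exacts [hc 0, (hc _).sub (hc _)]
  · rw [← tendsto_add_atTop_iff_nat 1]
    simpa only [hpartial] using hlim x

theorem exists_continuous_hasSum_sub [Nonempty K] {u v : K → ℝ} (hu : LowerSemicontinuous u)
    (hv : LowerSemicontinuous v) (hu0 : ∀ x, 0 ≤ u x) (hv0 : ∀ x, 0 ≤ v x) :
    ∃ φ : ℕ → K → ℝ, (∀ j, Continuous (φ j)) ∧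
      ∀ x, HasSum (φ · x) (u x - v x) ∧ HasSum (fun j => |φ j x|) (u x + v x) := by
  obtain ⟨ψ, hψ, hψ0, hψu⟩ := hu.exists_continuous_hasSum hu0
  obtain ⟨χ, hχ, hχ0, hχv⟩ := hv.exists_continuous_hasSum hv0
  let φ : ℕ → K → ℝ := fun j => if j % 2 = 0 then ψ (j / 2) else -χ (j / 2)
  have heven : ∀ k, φ (2 * k) = ψ k := fun k => by simp [φ]
  have hodd : ∀ k, φ (2 * k + 1) = -χ k := fun k => by
    simp [φ, Nat.add_mod, show (2 * k + 1) / 2 = k by omega]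
  refine ⟨φ, fun j => ?_, fun x => ⟨?_, ?_⟩⟩
  · by_cases hj : j % 2 = 0
    · simpa [φ, hj] using hψ (j / 2)
    · simpa [φ, hj] using (hχ (j / 2)).neg
  · rw [sub_eq_add_neg]
    exact HasSum.even_add_odd (by simpa [heven] using hψu x) (by simpa [hodd] using (hχv x).neg)
  · refine HasSum.even_add_odd ?_ ?_
    · simpa [heven, abs_of_nonneg (hψ0 _ x)] using hψu x
    · simpa [hodd, abs_of_nonneg (hχ0 _ x)] using hχv x

theorem abs_add_oscOrdR_le_of_hasSum {f : K → ℝ} {φ : ℕ → K → ℝ} (hφ : ∀ j, Continuous (φ j))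
    (hf : ∀ x, HasSum (φ · x) (f x)) (habs : ∀ x, Summable fun j => |φ j x|) {M : ℝ}
    (hM : ∀ x, ∑' j, |φ j x| ≤ M) (β : Ordinal) (x : K) :
    ((|f x| : ℝ) : EReal) + oscOrdR f β x ≤ M := by
  have hsu : ∀ x, Summable fun j => max (φ j x) 0 := fun x => (habs x).of_nonneg_of_le
    (fun j => le_max_right _ _) fun j => max_le (le_abs_self _) (abs_nonneg _)
  have hsv : ∀ x, Summable fun j => max (-φ j x) 0 := fun x => (habs x).of_nonneg_of_le
    (fun j => le_max_right _ _) fun j => max_le (neg_le_abs _) (abs_nonneg _)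
  set u := fun x => ∑' j, max (φ j x) 0
  set v := fun x => ∑' j, max (-φ j x) 0
  have hu : LowerSemicontinuous u := lowerSemicontinuous_tsum_of_nonneg
    (fun j => ((hφ j).max continuous_const).lowerSemicontinuous) (fun _ _ => le_max_right _ _) hsu
  have hv : LowerSemicontinuous v := lowerSemicontinuous_tsum_of_nonneg
    (fun j => ((hφ j).neg.max continuous_const).lowerSemicontinuous) (fun _ _ => le_max_right _ _)
    hsv
  have hfuv : f = fun x => u x - v x := funext fun x => (hf x).unique <| by
    simpa only [max_zero_sub_eq_self] using (hsu x).hasSum.sub (hsv x).hasSum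
  have huv : ∀ x, u x + v x ≤ M := fun x => by
    rw [← (hsu x).tsum_add (hsv x)]
    simpa only [max_zero_add_max_neg_zero_eq_abs_self] using hM x
  subst hfuv
  exact abs_add_oscOrdR_le hu hv (fun x => tsum_nonneg fun _ => le_max_right _ _)
    (fun x => tsum_nonneg fun _ => le_max_right _ _) huv β x

theorem IsOscSupersolution.dNorm_eq [Nonempty K] {f g : K → ℝ}
    (hg : IsOscSupersolution f fun x => (g x : EReal)) {α : Ordinal}
    (hosc : ∀ x, oscOrdR f α x = g x) {lam : ℝ}
    (hlam : IsLUB (Set.range fun x => |f x| + g x) lam) :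
    DNorm f = lam := by
  have hle : ∀ x, |f x| + g x ≤ lam := fun x => hlam.1 ⟨x, rfl⟩
  obtain ⟨φ, hφ, hsum⟩ := exists_continuous_hasSum_sub (hg.lowerSemicontinuous_half_add lam)
    (hg.lowerSemicontinuous_half_sub lam) (fun x => by linarith [hle x, neg_abs_le (f x)])
    (fun x => by linarith [hle x, le_abs_self (f x)])
  refine IsLeast.csInf_eq ⟨⟨φ, hφ, fun x => ?_, fun x => (hsum x).2.summable, fun x => ?_⟩, ?_⟩
  · convert (hsum x).1 using 1
    ring
  · rw [(hsum x).2.tsum_eq]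
    linarith [EReal.coe_nonneg.1 (hg.nonneg x)]
  · rintro M ⟨ψ, hψ, hψf, hψs, hM⟩
    refine hlam.2 (Set.forall_mem_range.2 fun x => ?_)
    exact_mod_cast hosc x ▸ abs_add_oscOrdR_le_of_hasSum hψ hψf hψs hM α x

end Series

theorem dNorm_of_isEmpty {K : Type*} [MetricSpace K] [IsEmpty K] (f : K → ℝ) : DNorm f = 0 := by
  simp [DNorm, show ∃ φ : ℕ → K → ℝ, ∀ j, Continuous (φ j) from ⟨0, fun _ => continuous_const⟩]

theorem dnorm_attained_general {K : Type*} [MetricSpace K] [CompactSpace K]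
    (f : K → ℝ) (hf : MemDKReal f) :
    ∃ α : Ordinal, α < (Cardinal.aleph 1).ord ∧
      oscOrdR f α = oscOrdR f (α + 1) ∧
      ∃ g : K → ℝ, (∀ x, oscOrdR f α x = ((g x : ℝ) : EReal)) ∧
        ∃ lam : ℝ, lam = (⨆ x : K, (|f x| + g x)) ∧
          (∀ x, 0 ≤ (lam - g x + f x) / 2) ∧
          LowerSemicontinuous (fun x => (lam - g x + f x) / 2) ∧
          (∀ x, 0 ≤ (lam - g x - f x) / 2) ∧
          LowerSemicontinuous (fun x => (lam - g x - f x) / 2) ∧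
          (∀ x, f x = (lam - g x + f x) / 2 - (lam - g x - f x) / 2) ∧
          DNorm f = lam ∧
          lam = ⨆ x : K, |(lam - g x + f x) / 2 + (lam - g x - f x) / 2| := by
  obtain ⟨M, hM⟩ := hf.exists_abs_add_oscOrdR_le
  obtain ⟨α, hα, hstab⟩ :=
    exists_lt_ord_aleph_one_eq_succ (oscOrdR_monotone f) (upperSemicontinuous_oscOrdR f)
  obtain ⟨g, hosc, hgM⟩ := exists_oscOrdR_eq_coe f (hM α)
  have hg : IsOscSupersolution f fun x => (g x : EReal) :=
    funext hosc ▸ isOscSupersolution_oscOrdR hstab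
  have hg0 : ∀ x, 0 ≤ g x := fun x => EReal.coe_nonneg.1 (hg.nonneg x)
  have hbdd : BddAbove (Set.range fun x => |f x| + g x) := ⟨M, Set.forall_mem_range.2 hgM⟩
  set lam := ⨆ x, (|f x| + g x)
  have hle : ∀ x, |f x| + g x ≤ lam := le_ciSup hbdd
  refine ⟨α, hα, hstab, g, hosc, lam, rfl, fun x => by linarith [hle x, neg_abs_le (f x)],
    hg.lowerSemicontinuous_half_add lam, fun x => by linarith [hle x, le_abs_self (f x)],
    hg.lowerSemicontinuous_half_sub lam, fun x => by ring, ?_⟩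
  have huv : ∀ x, |(lam - g x + f x) / 2 + (lam - g x - f x) / 2| = lam - g x := fun x => by
    rw [← add_div, abs_of_nonneg (by linarith [hle x, abs_nonneg (f x)])]
    ring
  simp only [huv]
  rcases isEmpty_or_nonempty K with hK | hK
  · simp [dNorm_of_isEmpty, lam]
  · refine ⟨hg.dNorm_eq hosc (isLUB_ciSup hbdd), ?_⟩
    rw [ciSup_const_sub_eq_sub_ciInf ⟨0, Set.forall_mem_range.2 hg0⟩, hg.iInf_eq_zero hosc,
      sub_zero]

/-- For bounded real `f ∈ D(K)`: there is a countable ordinal `α` with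
`osc_α f = osc_{α+1} f` (and `osc_α f` real-valued); setting
`λ = ‖|f| + osc_α f‖_∞`, `u = (λ - osc_α f + f)/2`, `v = (λ - osc_α f - f)/2`,
the functions `u, v` are nonnegative lower semicontinuous with `f = u - v` and
`‖f‖_D = λ = ‖u + v‖_∞`. -/
theorem dnorm_attained {K : Type*} [MetricSpace K] [CompactSpace K]
    (f : K → ℝ) (hbdd : ∃ M : ℝ, ∀ x, |f x| ≤ M) (hf : MemDKReal f) :
    ∃ α : Ordinal, α < (Cardinal.aleph 1).ord ∧
      oscOrdR f α = oscOrdR f (α + 1) ∧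
      ∃ g : K → ℝ, (∀ x, oscOrdR f α x = ((g x : ℝ) : EReal)) ∧
        ∃ lam : ℝ, lam = (⨆ x : K, (|f x| + g x)) ∧
          (∀ x, 0 ≤ (lam - g x + f x) / 2) ∧
          LowerSemicontinuous (fun x => (lam - g x + f x) / 2) ∧
          (∀ x, 0 ≤ (lam - g x - f x) / 2) ∧
          LowerSemicontinuous (fun x => (lam - g x - f x) / 2) ∧
          (∀ x, f x = (lam - g x + f x) / 2 - (lam - g x - f x) / 2) ∧
          DNorm f = lam ∧
          lam = ⨆ x : K, |(lam - g x + f x) / 2 + (lam - g x - f x) / 2| :=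
  dnorm_attained_general f hf
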